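/- For every D ≥ 0 there exists D' ≥ 0, depending only on D, such that for every proper geodesic metric space X, every D-contracting geodesic in X is D'-super-contracting. -/

import Mathlib

/-! Geodesics, quasi-geodesics, projections, contracting and super-contracting
geodesics, and Morse geodesics in a metric space. -/

open Metric Set

section Defs

variable {X : Type*} [MetricSpace X]

/-- `γ` is a geodesic parametrized by `[a,b]`:
`dist (γ s) (γ t) = |s - t|` for all `s, t ∈ [a,b]`. -/
def IsGeodesicOn (γ : ℝ → X) (a b : ℝ) : Prop :=
  ∀ s ∈ Icc a b, ∀ t ∈ Icc a b, dist (γ s) (γ t) = |s - t|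

/-- `X` is a geodesic metric space: every two points are joined by a geodesic. -/
def GeodesicSpace (X : Type*) [MetricSpace X] : Prop :=
  ∀ x y : X, ∃ γ : ℝ → X, IsGeodesicOn γ 0 (dist x y) ∧ γ 0 = x ∧ γ (dist x y) = y

/-- `σ` is a `(lam, eps)`-quasi-geodesic parametrized by `[a,b]`. -/
def IsQuasiGeodesicOn (σ : ℝ → X) (a b lam eps : ℝ) : Prop :=
  ∀ s ∈ Icc a b, ∀ t ∈ Icc a b,
    (1 / lam) * |s - t| - eps ≤ dist (σ s) (σ t) ∧
      dist (σ s) (σ t) ≤ lam * |s - t| + eps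

/-- The projection `π_C(x)`: points of `C` realizing `infDist x C`. -/
def projPt (C : Set X) (x : X) : Set X :=
  {p ∈ C | dist x p = infDist x C}

/-- The map `γ` (with parameter interval `[a,b]`) is `D`-contracting: for any
closed ball `B` disjoint from the image of `γ`, the projection `π_{im γ}(B)`
has diameter at most `D`. -/
def ContractingOn (γ : ℝ → X) (a b D : ℝ) : Prop :=
  ∀ (z : X) (r : ℝ), Disjoint (closedBall z r) (γ '' Icc a b) →
    ∀ x ∈ closedBall z r, ∀ y ∈ closedBall z r,
      ∀ p ∈ projPt (γ '' Icc a b) x, ∀ q ∈ projPt (γ '' Icc a b) y,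
        dist p q ≤ D

/-- `γ` (with parameter interval `[a,b]`) is `D`-super-contracting: every
subsegment of `γ` is `D`-contracting. -/
def SuperContractingOn (γ : ℝ → X) (a b D : ℝ) : Prop :=
  ∀ s t : ℝ, a ≤ s → s ≤ t → t ≤ b → ContractingOn γ s t D

/-- `γ` (with parameter interval `[a,b]`) is `N`-Morse: every
`(lam, eps)`-quasi-geodesic with endpoints on the image of `γ` stays within
distance `N lam eps` of the image of `γ`. -/
def MorseOn (γ : ℝ → X) (a b : ℝ) (N : ℝ → ℝ → ℝ) : Prop :=
  ∀ lam eps : ℝ, 1 ≤ lam → 0 ≤ eps →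
    ∀ (σ : ℝ → X) (c d : ℝ), c ≤ d → IsQuasiGeodesicOn σ c d lam eps →
      σ c ∈ γ '' Icc a b → σ d ∈ γ '' Icc a b →
        ∀ s ∈ Icc c d, infDist (σ s) (γ '' Icc a b) ≤ N lam eps

end Defs

/-! Fix a map `Φ` sending each point to the parameter of one of its nearest points on `γ`.
Contraction makes `Φ` coarsely Lipschitz: `|Φ x - Φ y| ≤ max D (4 * dist x y)`. If `Φ w` lies
in `[s, t]`, then the nearest points of `w` on `γ [s, t]` are nearest points on all of `γ`, so
the contraction of `γ` applies at `w`. Walking along a geodesic from `x` to `y`, a coarse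
intermediate value theorem produces such a `w` as soon as `Φ x` and `Φ y` lie on either side
of a point deep inside `[s, t]`. Hence `Φ` clamped to `[s, t]` moves by a bounded amount both
from a point to its projection on `γ [s, t]` and across a ball avoiding `γ [s, t]`. -/

section Coarse

variable {f : ℝ → ℝ} {α β δ E : ℝ}

theorem coarse_intermediate_value_Icc' {c : ℝ} (hαβ : α ≤ β) (hδ : 0 < δ)
    (hf : ∀ u ∈ Icc α β, ∀ v ∈ Icc α β, |u - v| ≤ δ → |f u - f v| ≤ E)
    (hα : c ≤ f α) (hβ : f β ≤ c) : ∃ τ ∈ Icc α β, |f τ - c| ≤ E := by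
  have hclose : ∀ β' ∈ Icc α β, f β' ≤ c → (α ≤ β' - δ → c < f (β' - δ)) →
      |f β' - c| ≤ E := by
    intro β' hβ' hfβ' hprev
    obtain ⟨ν, hν, hcν, hνβ'⟩ : ∃ ν ∈ Icc α β, c ≤ f ν ∧ β' - ν ∈ Icc 0 δ := by
      by_cases h : α ≤ β' - δ
      · exact ⟨β' - δ, ⟨h, by linarith [hβ'.2]⟩, (hprev h).le, by constructor <;> linarith⟩
      · exact ⟨α, ⟨le_rfl, hαβ⟩, hα, by constructor <;> linarith [hβ'.1]⟩
    have := hf β' hβ' ν hν (abs_le.2 ⟨by linarith [hνβ'.1], hνβ'.2⟩)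
    rw [abs_le] at this ⊢
    constructor <;> linarith
  -- Walk left from `β` in steps of `δ` until the value of `f` exceeds `c`.
  suffices h : ∀ n : ℕ, ∀ β' ∈ Icc α β, β' ≤ α + n * δ → f β' ≤ c →
      ∃ τ ∈ Icc α β', |f τ - c| ≤ E by
    obtain ⟨n, hn⟩ := exists_nat_ge ((β - α) / δ)
    exact h n β ⟨hαβ, le_rfl⟩ (by rw [div_le_iff₀ hδ] at hn; linarith) hβ
  intro n
  induction n with
  | zero =>
    intro β' hβ' hle hfβ'
    exact ⟨β', ⟨hβ'.1, le_rfl⟩, hclose β' hβ' hfβ' fun h => by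
      simp only [CharP.cast_eq_zero, zero_mul, add_zero] at hle
      linarith⟩
  | succ n ih =>
    intro β' hβ' hle hfβ'
    by_cases hprev : α ≤ β' - δ ∧ f (β' - δ) ≤ c
    · obtain ⟨τ, hτ, hτc⟩ := ih (β' - δ) ⟨hprev.1, by linarith [hβ'.2]⟩
        (by push_cast at hle; linarith) hprev.2
      exact ⟨τ, ⟨hτ.1, by linarith [hτ.2]⟩, hτc⟩
    · exact ⟨β', ⟨hβ'.1, le_rfl⟩, hclose β' hβ' hfβ' fun h =>
        lt_of_not_ge fun h' => hprev ⟨h, h'⟩⟩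

variable {D s t : ℝ}

theorem sub_le_max_of_coarse (hαβ : α ≤ β) (hδ : 0 < δ) (hD : 0 ≤ D)
    (hf : ∀ u ∈ Icc α β, ∀ v ∈ Icc α β, |u - v| ≤ δ → |f u - f v| ≤ E)
    (hnear : ∀ τ ∈ Icc α β, f τ ∈ Icc s t → |f τ - f β| ≤ D) (ht : t ≤ f α) :
    t - (2 * E + D) ≤ max s (f β) := by
  by_contra! h
  obtain ⟨hs, hfβ⟩ := max_lt_iff.1 h
  have hE : 0 ≤ E := by simpa using hf α ⟨le_rfl, hαβ⟩ α ⟨le_rfl, hαβ⟩ (by simp [hδ.le])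
  obtain ⟨τ, hτ, hτc⟩ :=
    coarse_intermediate_value_Icc' (c := t - E) hαβ hδ hf (by linarith) (by linarith)
  rw [abs_le] at hτc
  have := abs_le.1 (hnear τ hτ ⟨by linarith, by linarith⟩)
  linarith

theorem abs_projIcc_sub_projIcc_le_of_coarse (hst : s ≤ t) (hαβ : α ≤ β) (hδ : 0 < δ)
    (hD : 0 ≤ D) (hf : ∀ u ∈ Icc α β, ∀ v ∈ Icc α β, |u - v| ≤ δ → |f u - f v| ≤ E)
    (hnear : ∀ τ ∈ Icc α β, f τ ∈ Icc s t → |f τ - f β| ≤ D) :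
    |(projIcc s t hst (f α) : ℝ) - projIcc s t hst (f β)| ≤ 2 * E + D := by
  have hE : 0 ≤ E := by simpa using hf α ⟨le_rfl, hαβ⟩ α ⟨le_rfl, hαβ⟩ (by simp [hδ.le])
  rcases lt_or_ge (f α) s with hs | hs
  · have := sub_le_max_of_coarse (f := fun u => -f u) (s := -t) (t := -s) hαβ hδ hD
      (fun u hu v hv huv => by
        simpa only [neg_sub_neg, abs_sub_comm (f v)] using hf u hu v hv huv)
      (fun τ hτ hfτ => by
        simpa only [neg_sub_neg, abs_sub_comm (f β)] using
          hnear τ hτ ⟨by linarith [hfτ.2], by linarith [hfτ.1]⟩)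
      (by linarith)
    rw [projIcc_of_le_left hst hs.le, coe_projIcc, abs_le]
    constructor <;> grind
  rcases le_or_gt (f α) t with ht | ht
  · exact (abs_projIcc_sub_projIcc hst).trans
      ((hnear α ⟨le_rfl, hαβ⟩ ⟨hs, ht⟩).trans (by linarith))
  · have := sub_le_max_of_coarse hαβ hδ hD hf hnear ht.le
    rw [projIcc_of_right_le hst ht.le, coe_projIcc, abs_le]
    constructor <;> grind

end Coarse

section Projection

variable {X : Type*} [MetricSpace X] {A C : Set X} {x w p : X}

theorem mem_projPt_of_dist_add_dist_eq (hp : p ∈ projPt C x)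
    (hw : dist x w + dist w p = dist x p) : p ∈ projPt C w := by
  refine ⟨hp.1, le_antisymm ?_ (infDist_le_dist_of_mem hp.1)⟩
  have := infDist_le_infDist_add_dist (x := x) (y := w) (s := C)
  rw [← hp.2] at this
  linarith

theorem projPt_subset_projPt_of_mem (hCA : C ⊆ A) (hp : p ∈ projPt A x) (hpC : p ∈ C) :
    projPt C x ⊆ projPt A x := by
  have hinf : infDist x C = infDist x A :=
    le_antisymm (hp.2 ▸ infDist_le_dist_of_mem hpC) (infDist_le_infDist_of_subset hCA ⟨p, hpC⟩)
  exact fun q hq => ⟨hCA hq.1, hq.2.trans hinf⟩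

theorem disjoint_closedBall_of_mem_projPt {ρ : ℝ} (hp : p ∈ projPt A x) (hpC : p ∈ C)
    (h : Disjoint (closedBall x ρ) C) : Disjoint (closedBall x ρ) A := by
  refine disjoint_closedBall_of_lt_infDist ?_
  rw [← hp.2, ← not_le, ← mem_closedBall']
  exact fun hpx => disjoint_left.1 h hpx hpC

end Projection

section Geodesic

variable {X : Type*} [MetricSpace X] {γ : ℝ → X} {a b : ℝ}

theorem IsGeodesicOn.isCompact_image (h : IsGeodesicOn γ a b) : IsCompact (γ '' Icc a b) := by
  refine isCompact_Icc.image_of_continuousOn (LipschitzOnWith.continuousOn (K := 1) ?_)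
  exact LipschitzOnWith.of_dist_le_mul fun u hu v hv => by simp [h u hu v hv, Real.dist_eq]

theorem IsGeodesicOn.dist_add_dist_eq (h : IsGeodesicOn γ a b) {τ : ℝ} (hτ : τ ∈ Icc a b) :
    dist (γ a) (γ τ) + dist (γ τ) (γ b) = dist (γ a) (γ b) := by
  have hab : a ≤ b := hτ.1.trans hτ.2
  rw [h a ⟨le_rfl, hab⟩ τ hτ, h τ hτ b ⟨hab, le_rfl⟩, h a ⟨le_rfl, hab⟩ b ⟨hab, le_rfl⟩,
    abs_of_nonpos (sub_nonpos.2 hτ.1), abs_of_nonpos (sub_nonpos.2 hτ.2),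
    abs_of_nonpos (sub_nonpos.2 hab)]
  ring

end Geodesic

section Contracting

variable {X : Type*} [MetricSpace X] {γ : ℝ → X} {a b D : ℝ} {x y p q : X}

theorem ContractingOn.dist_le_max (hcon : ContractingOn γ a b D)
    (hp : p ∈ projPt (γ '' Icc a b) x) (hq : q ∈ projPt (γ '' Icc a b) y) :
    dist p q ≤ max D (4 * dist x y) := by
  rcases lt_or_ge (dist x y) (infDist x (γ '' Icc a b)) with hfar | hclose
  · exact (hcon x _ (disjoint_closedBall_of_lt_infDist hfar) x (mem_closedBall_self dist_nonneg)
      y (mem_closedBall'.2 le_rfl) p hp q hq).trans (le_max_left _ _)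
  · have hy : infDist y (γ '' Icc a b) ≤ infDist x (γ '' Icc a b) + dist y x :=
      infDist_le_infDist_add_dist
    have hpx : dist p x = infDist x (γ '' Icc a b) := by rw [dist_comm, hp.2]
    have := dist_triangle4 p x y q
    rw [hpx, hq.2] at this
    rw [dist_comm y] at hy
    exact le_max_of_le_right (by linarith)

theorem ContractingOn.dist_le_of_mem_projPt (hcon : ContractingOn γ a b D) (hD : 0 ≤ D)
    (hp : p ∈ projPt (γ '' Icc a b) x) (hq : q ∈ projPt (γ '' Icc a b) x) : dist p q ≤ D := by
  simpa [hD] using hcon.dist_le_max hp hq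

end Contracting

section ProjParam

variable {X : Type*} [MetricSpace X] {γ : ℝ → X} {a b D s t : ℝ} {Φ : X → ℝ}

def IsProjParam (γ : ℝ → X) (a b : ℝ) (Φ : X → ℝ) : Prop :=
  ∀ x, Φ x ∈ Icc a b ∧ γ (Φ x) ∈ projPt (γ '' Icc a b) x

theorem IsGeodesicOn.exists_isProjParam (hgeo : IsGeodesicOn γ a b) (hab : a ≤ b) :
    ∃ Φ, IsProjParam γ a b Φ := by
  have hproj : ∀ x, ∃ u ∈ Icc a b, γ u ∈ projPt (γ '' Icc a b) x := fun x => by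
    obtain ⟨_, ⟨u, hu, rfl⟩, hdist⟩ :=
      hgeo.isCompact_image.exists_infDist_eq_dist ⟨γ a, mem_image_of_mem γ ⟨le_rfl, hab⟩⟩ x
    exact ⟨u, hu, mem_image_of_mem γ hu, hdist.symm⟩
  choose Φ hΦ using hproj
  exact ⟨Φ, fun x => hΦ x⟩

namespace IsProjParam

theorem apply_self (hΦ : IsProjParam γ a b Φ) (hgeo : IsGeodesicOn γ a b) {u : ℝ}
    (hu : u ∈ Icc a b) : Φ (γ u) = u := by
  have hdist := (hΦ (γ u)).2.2
  rw [infDist_zero_of_mem (mem_image_of_mem γ hu), dist_comm, hgeo _ (hΦ _).1 u hu] at hdist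
  exact sub_eq_zero.1 (abs_eq_zero.1 hdist)

theorem abs_sub_le_max (hΦ : IsProjParam γ a b Φ) (hgeo : IsGeodesicOn γ a b)
    (hcon : ContractingOn γ a b D) (x y : X) : |Φ x - Φ y| ≤ max D (4 * dist x y) :=
  hgeo _ (hΦ x).1 _ (hΦ y).1 ▸ hcon.dist_le_max (hΦ x).2 (hΦ y).2

theorem abs_sub_le_of_mem_projPt (hΦ : IsProjParam γ a b Φ) (hgeo : IsGeodesicOn γ a b)
    (hcon : ContractingOn γ a b D) (hD : 0 ≤ D) (hsub : Icc s t ⊆ Icc a b) {x w p : X}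
    (hp : p ∈ projPt (γ '' Icc s t) x) (hw : dist x w + dist w p = dist x p)
    (hΦw : Φ w ∈ Icc s t) : |Φ w - Φ p| ≤ D := by
  have hpw : p ∈ projPt (γ '' Icc a b) w :=
    projPt_subset_projPt_of_mem (image_mono hsub) (hΦ w).2 (mem_image_of_mem γ hΦw)
      (mem_projPt_of_dist_add_dist_eq hp hw)
  obtain ⟨u, hu, rfl⟩ := hp.1
  rw [hΦ.apply_self hgeo (hsub hu), ← hgeo _ (hΦ w).1 u (hsub hu)]
  exact hcon.dist_le_of_mem_projPt hD (hΦ w).2 hpw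

theorem abs_sub_le_of_disjoint_closedBall (hΦ : IsProjParam γ a b Φ)
    (hgeo : IsGeodesicOn γ a b) (hcon : ContractingOn γ a b D) {z w x : X} {r : ℝ}
    (hdisj : Disjoint (closedBall z r) (γ '' Icc s t))
    (hx : x ∈ closedBall z r) (hw : dist z w + dist w x = dist z x) (hΦw : Φ w ∈ Icc s t) :
    |Φ w - Φ x| ≤ D := by
  have hball : closedBall w (dist w x) ⊆ closedBall z r := fun y hy => by
    have := dist_triangle z w y
    rw [mem_closedBall'] at hy ⊢
    rw [mem_closedBall'] at hx
    linarith
  have hdisjA := disjoint_closedBall_of_mem_projPt (hΦ w).2 (mem_image_of_mem γ hΦw)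
    (hdisj.mono_left hball)
  rw [← hgeo _ (hΦ w).1 _ (hΦ x).1]
  exact hcon w _ hdisjA w (mem_closedBall_self dist_nonneg) x (mem_closedBall'.2 le_rfl)
    _ (hΦ w).2 _ (hΦ x).2

theorem abs_projIcc_sub_projIcc_le (hΦ : IsProjParam γ a b Φ) (hX : GeodesicSpace X)
    (hgeo : IsGeodesicOn γ a b) (hcon : ContractingOn γ a b D) (hD : 0 ≤ D) (hst : s ≤ t)
    {x y : X} (hnear : ∀ w, dist x w + dist w y = dist x y → Φ w ∈ Icc s t → |Φ w - Φ y| ≤ D) :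
    |(projIcc s t hst (Φ x) : ℝ) - projIcc s t hst (Φ y)| ≤ 3 * D + 2 := by
  obtain ⟨g, hg, hg0, hgL⟩ := hX x y
  have hcoarse : ∀ u ∈ Icc 0 (dist x y), ∀ v ∈ Icc 0 (dist x y), |u - v| ≤ (D + 1) / 4 →
      |Φ (g u) - Φ (g v)| ≤ D + 1 := fun u hu v hv huv => by
    refine (hΦ.abs_sub_le_max hgeo hcon _ _).trans (max_le (by linarith) ?_)
    rw [hg u hu v hv]
    linarith
  have := abs_projIcc_sub_projIcc_le_of_coarse (f := Φ ∘ g) hst dist_nonneg (by positivity) hD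
    hcoarse fun τ hτ => by
      have hτ' : dist x (g τ) + dist (g τ) y = dist x y := by
        simpa only [hg0, hgL] using hg.dist_add_dist_eq hτ
      simpa only [Function.comp, hgL] using hnear (g τ) hτ'
  simp only [Function.comp, hg0, hgL] at this
  linarith

theorem abs_sub_projIcc_le (hΦ : IsProjParam γ a b Φ) (hX : GeodesicSpace X)
    (hgeo : IsGeodesicOn γ a b) (hcon : ContractingOn γ a b D) (hD : 0 ≤ D) (hst : s ≤ t)
    (hsub : Icc s t ⊆ Icc a b) {x : X} {u : ℝ} (hu : u ∈ Icc s t)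
    (hp : γ u ∈ projPt (γ '' Icc s t) x) : |u - projIcc s t hst (Φ x)| ≤ 3 * D + 2 := by
  have := hΦ.abs_projIcc_sub_projIcc_le hX hgeo hcon hD hst fun w hw hΦw =>
    hΦ.abs_sub_le_of_mem_projPt hgeo hcon hD hsub hp hw hΦw
  rwa [hΦ.apply_self hgeo (hsub hu), projIcc_of_mem hst hu, abs_sub_comm] at this

end IsProjParam

theorem ContractingOn.superContractingOn (hX : GeodesicSpace X) (hgeo : IsGeodesicOn γ a b)
    (hcon : ContractingOn γ a b D) (hD : 0 ≤ D) : SuperContractingOn γ a b (12 * D + 8) := by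
  intro s t has hst htb z r hdisj x hx y hy p hp q hq
  have hsub : Icc s t ⊆ Icc a b := Icc_subset_Icc has htb
  obtain ⟨Φ, hΦ⟩ := hgeo.exists_isProjParam (has.trans (hst.trans htb))
  obtain ⟨u, hu, rfl⟩ := hp.1
  obtain ⟨v, hv, rfl⟩ := hq.1
  have hzx := hΦ.abs_projIcc_sub_projIcc_le hX hgeo hcon hD hst fun w hw hΦw =>
    hΦ.abs_sub_le_of_disjoint_closedBall hgeo hcon hdisj hx hw hΦw
  have hzy := hΦ.abs_projIcc_sub_projIcc_le hX hgeo hcon hD hst fun w hw hΦw =>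
    hΦ.abs_sub_le_of_disjoint_closedBall hgeo hcon hdisj hy hw hΦw
  have hux := hΦ.abs_sub_projIcc_le hX hgeo hcon hD hst hsub hu hp
  have hvy := hΦ.abs_sub_projIcc_le hX hgeo hcon hD hst hsub hv hq
  rw [hgeo u (hsub hu) v (hsub hv)]
  rw [abs_le] at hzx hzy hux hvy ⊢
  constructor <;> linarith

end ProjParam

/-- for every `D ≥ 0` there is a `D' ≥ 0` depending only on `D`
such that in any proper geodesic metric space, every `D`-contracting geodesic
is `D'`-super-contracting. -/
theorem contracting_implies_super_contracting :
    ∀ D : ℝ, 0 ≤ D → ∃ D' : ℝ, 0 ≤ D' ∧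
      ∀ (X : Type) [MetricSpace X] [ProperSpace X], GeodesicSpace X →
        ∀ (γ : ℝ → X) (a b : ℝ), a ≤ b → IsGeodesicOn γ a b →
          ContractingOn γ a b D → SuperContractingOn γ a b D' := by
  intro D hD
  exact ⟨12 * D + 8, by positivity, fun X _ _ hX γ a b _ hgeo hcon =>
    hcon.superContractingOn hX hgeo hD⟩
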